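/- arXiv:2602.03684 — 2 statements merged into one kernel-verified Lean document; each statement's English description precedes it below -/
import Mathlib

section
/- Fix y ∈ ℝ³ with ‖y‖ = 1, and let U = {x ∈ ℝ³ : −1 < x·y < 1}. The function F : U → ℝ, F(x) = −(1/(2π)) ln(sin(½ arccos(x·y))), is differentiable on U and its gradient at x ∈ U equals ∇F(x) = y/(4π(1 − x·y)). Consequently, for every x ∈ U, x × ∇F(x) = (1/(4π)) (x × y)/(1 − x·y). -/
open Real RealInnerProductSpace

/-- The cross product on `ℝ³ = EuclideanSpace ℝ (Fin 3)`. -/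
noncomputable def crossE (a b : EuclideanSpace ℝ (Fin 3)) : EuclideanSpace ℝ (Fin 3) :=
  (WithLp.equiv 2 (Fin 3 → ℝ)).symm
    (crossProduct (WithLp.equiv 2 (Fin 3 → ℝ) a) (WithLp.equiv 2 (Fin 3 → ℝ) b))

/-! On `−1 < t < 1` the half-angle formula gives `sin (½ arccos t) = √((1 − t)/2)`, so near `x`
the Green's function is `−(1/(4π)) log ((1 − ⟪z, y⟫)/2)`, whose gradient follows from the chain rule
through the linear form `z ↦ ⟪z, y⟫`. -/

theorem crossE_smul_right (a b : EuclideanSpace ℝ (Fin 3)) (c : ℝ) :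
    crossE a (c • b) = c • crossE a b := by
  simp only [crossE, WithLp.equiv_apply, WithLp.equiv_symm_apply, WithLp.ofLp_smul, map_smul,
    WithLp.toLp_smul]

namespace Real

theorem sin_half_arccos {t : ℝ} (h₁ : -1 ≤ t) (h₂ : t ≤ 1) :
    sin (1 / 2 * arccos t) = √((1 - t) / 2) := by
  rw [one_div_mul_eq_div, sin_half_eq_sqrt (arccos_nonneg t)
      ((arccos_le_pi t).trans (by linarith [pi_pos])), cos_arccos h₁ h₂]

theorem log_sin_half_arccos {t : ℝ} (h₁ : -1 ≤ t) (h₂ : t ≤ 1) :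
    log (sin (1 / 2 * arccos t)) = log ((1 - t) / 2) / 2 := by
  rw [sin_half_arccos h₁ h₂, log_sqrt (by linarith)]

theorem hasDerivAt_log_sin_half_arccos {t : ℝ} (h₁ : -1 < t) (h₂ : t < 1) :
    HasDerivAt (fun s => log (sin (1 / 2 * arccos s))) (-(2 * (1 - t))⁻¹) t := by
  have hlocal : (fun s => log (sin (1 / 2 * arccos s))) =ᶠ[nhds t]
      fun s => log ((1 - s) / 2) / 2 := by
    filter_upwards [Ioo_mem_nhds h₁ h₂] with s hs
    exact log_sin_half_arccos hs.1.le hs.2.le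
  have hlin : HasDerivAt (fun s : ℝ => (1 - s) / 2) (-1 / 2) t := by
    simpa using ((hasDerivAt_id t).const_sub 1).div_const 2
  refine ((hlin.log (by linarith)).div_const 2).congr_of_eventuallyEq hlocal |>.congr_deriv ?_
  field_simp

end Real

theorem HasDerivAt.hasGradientAt_comp_inner {E : Type*} [NormedAddCommGroup E]
    [InnerProductSpace ℝ E] [CompleteSpace E] {g : ℝ → ℝ} {g' : ℝ} {x y : E}
    (hg : HasDerivAt g g' ⟪x, y⟫) : HasGradientAt (fun z => g ⟪z, y⟫) (g' • y) x := by
  rw [hasGradientAt_iff_hasFDerivAt]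
  have hinner : HasFDerivAt (fun z : E => ⟪z, y⟫) (innerSL ℝ y) x := by
    convert (innerSL ℝ y).hasFDerivAt using 1
    ext z
    exact real_inner_comm y z
  refine (hg.comp_hasFDerivAt x hinner).congr_fderiv ?_
  ext v
  simp

theorem spherical_green_gradient_general (y : EuclideanSpace ℝ (Fin 3))
    (x : EuclideanSpace ℝ (Fin 3)) (hx1 : -1 < ⟪x, y⟫) (hx2 : ⟪x, y⟫ < 1) :
    DifferentiableAt ℝ
      (fun z => -(1 / (2 * π)) * Real.log (Real.sin ((1 / 2) * Real.arccos ⟪z, y⟫))) x ∧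
    gradient (fun z => -(1 / (2 * π)) * Real.log (Real.sin ((1 / 2) * Real.arccos ⟪z, y⟫))) x
      = (4 * π * (1 - ⟪x, y⟫))⁻¹ • y ∧
    crossE x (gradient
        (fun z => -(1 / (2 * π)) * Real.log (Real.sin ((1 / 2) * Real.arccos ⟪z, y⟫))) x)
      = (1 / (4 * π)) • (1 - ⟪x, y⟫)⁻¹ • crossE x y := by
  have hprofile : HasDerivAt (fun t => -(1 / (2 * π)) * log (sin (1 / 2 * arccos t)))
      (4 * π * (1 - ⟪x, y⟫))⁻¹ ⟪x, y⟫ :=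
    ((hasDerivAt_log_sin_half_arccos hx1 hx2).const_mul _).congr_deriv (by
      have : 1 - ⟪x, y⟫ ≠ 0 := by linarith
      field_simp
      norm_num)
  have hgrad := hprofile.hasGradientAt_comp_inner (y := y)
  refine ⟨hgrad.differentiableAt, hgrad.gradient, ?_⟩
  rw [hgrad.gradient, crossE_smul_right, mul_inv, ← smul_smul, one_div]

/-- Lemma 46: for a unit vector `y ∈ ℝ³` and `x` with `−1 < x·y < 1`, the spherical Green's
function `F(x) = −(1/(2π)) ln(sin(½ arccos(x·y)))` is differentiable at `x` with gradient
`∇F(x) = y/(4π(1 − x·y))`; consequently `x × ∇F(x) = (1/(4π)) (x × y)/(1 − x·y)`. -/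
theorem spherical_green_gradient (y : EuclideanSpace ℝ (Fin 3)) (hy : ‖y‖ = 1)
    (x : EuclideanSpace ℝ (Fin 3)) (hx1 : -1 < ⟪x, y⟫) (hx2 : ⟪x, y⟫ < 1) :
    DifferentiableAt ℝ
      (fun z => -(1 / (2 * π)) * Real.log (Real.sin ((1 / 2) * Real.arccos ⟪z, y⟫))) x ∧
    gradient (fun z => -(1 / (2 * π)) * Real.log (Real.sin ((1 / 2) * Real.arccos ⟪z, y⟫))) x
      = (4 * π * (1 - ⟪x, y⟫))⁻¹ • y ∧
    crossE x (gradient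
        (fun z => -(1 / (2 * π)) * Real.log (Real.sin ((1 / 2) * Real.arccos ⟪z, y⟫))) x)
      = (1 / (4 * π)) • (1 - ⟪x, y⟫)⁻¹ • crossE x y :=
  spherical_green_gradient_general y x hx1 hx2
end

section
/- Let p₁, p₂ ∈ ℝ³ be distinct unit vectors with p₁·p₂ < 1, carrying vortex strengths ω₁ = −ω and ω₂ = ω for some ω ∈ ℝ. Then the two vortex velocities of the spherical point-vortex dynamics coincide: u(p₁) := (ω₂/(4π)) (p₁ × p₂)/(1 − p₁·p₂) and u(p₂) := (ω₁/(4π)) (p₂ × p₁)/(1 − p₂·p₁) satisfy u(p₁) = u(p₂) = (ω/(4π)) (p₁ × p₂)/(1 − p₁·p₂), and this common velocity is orthogonal to both p₁ and p₂. -/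
open Real RealInnerProductSpace

lemma EuclideanSpace.real_inner_eq_dotProduct {ι : Type*} [Fintype ι] (a b : EuclideanSpace ℝ ι) :
    ⟪a, b⟫ = WithLp.equiv 2 (ι → ℝ) b ⬝ᵥ WithLp.equiv 2 (ι → ℝ) a := by
  simp [EuclideanSpace.inner_eq_star_dotProduct]

lemma crossE_anticomm (a b : EuclideanSpace ℝ (Fin 3)) : crossE b a = -crossE a b := by
  rw [crossE, crossE, ← cross_anticomm]
  rfl

lemma inner_crossE_self_left (a b : EuclideanSpace ℝ (Fin 3)) : ⟪crossE a b, a⟫ = 0 := by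
  rw [EuclideanSpace.real_inner_eq_dotProduct]
  exact dot_self_cross _ _

lemma inner_crossE_self_right (a b : EuclideanSpace ℝ (Fin 3)) : ⟪crossE a b, b⟫ = 0 := by
  rw [EuclideanSpace.real_inner_eq_dotProduct]
  exact dot_cross_self _ _

theorem spherical_vortex_pair_geodesic_general (p₁ p₂ : EuclideanSpace ℝ (Fin 3)) (ω : ℝ) :
    (ω / (4 * π)) • (1 - ⟪p₁, p₂⟫)⁻¹ • crossE p₁ p₂ =
        ((-ω) / (4 * π)) • (1 - ⟪p₂, p₁⟫)⁻¹ • crossE p₂ p₁ ∧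
    ⟪(ω / (4 * π)) • (1 - ⟪p₁, p₂⟫)⁻¹ • crossE p₁ p₂, p₁⟫ = 0 ∧
    ⟪(ω / (4 * π)) • (1 - ⟪p₁, p₂⟫)⁻¹ • crossE p₁ p₂, p₂⟫ = 0 := by
  refine ⟨?_, ?_, ?_⟩
  · rw [crossE_anticomm p₁ p₂, real_inner_comm p₁ p₂]
    simp only [neg_div, neg_smul, smul_neg, neg_neg]
  · simp only [real_inner_smul_left, inner_crossE_self_left, mul_zero]
  · simp only [real_inner_smul_left, inner_crossE_self_right, mul_zero]

/-- Kimura's conjecture on the sphere (section 6.2): for distinct unit vectors `p₁, p₂` with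
`p₁·p₂ < 1`, carrying strengths `ω₁ = −ω`, `ω₂ = ω`, the two spherical vortex velocities
`u(p₁) = (ω₂/(4π)) (p₁ × p₂)/(1 − p₁·p₂)` and `u(p₂) = (ω₁/(4π)) (p₂ × p₁)/(1 − p₂·p₁)`
coincide, equal `(ω/(4π)) (p₁ × p₂)/(1 − p₁·p₂)`, and are orthogonal to both `p₁` and `p₂`. -/
theorem spherical_vortex_pair_geodesic (p₁ p₂ : EuclideanSpace ℝ (Fin 3))
    (hp₁ : ‖p₁‖ = 1) (hp₂ : ‖p₂‖ = 1) (hne : p₁ ≠ p₂) (hdot : ⟪p₁, p₂⟫ < 1) (ω : ℝ) :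
    (ω / (4 * π)) • (1 - ⟪p₁, p₂⟫)⁻¹ • crossE p₁ p₂ =
        ((-ω) / (4 * π)) • (1 - ⟪p₂, p₁⟫)⁻¹ • crossE p₂ p₁ ∧
    ⟪(ω / (4 * π)) • (1 - ⟪p₁, p₂⟫)⁻¹ • crossE p₁ p₂, p₁⟫ = 0 ∧
    ⟪(ω / (4 * π)) • (1 - ⟪p₁, p₂⟫)⁻¹ • crossE p₁ p₂, p₂⟫ = 0 :=
  spherical_vortex_pair_geodesic_general p₁ p₂ ω
end
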